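/- arXiv:2503.09004 — 3 statements merged into one kernel-verified Lean document; each statement's English description precedes it below -/
import Mathlib

section
/- The function H(x,y) = (1/16) x^{-2} (x-1)^2 (x^2 + 2x + 1 + 4y^2) is a first integral of the planar system ẋ = xy - x²y, ẏ = y² + (1/4)x³ + (1/4)x² + (1/4)x + 1/4; that is, along any solution with x ≠ 0 the derivative of H(x(t), y(t)) with respect to t is zero. -/
/-!
The three factors of `H` are Darboux functions of the system: along a solution
`x' = (y (1 - x)) x`, `(x - 1)' = (-x y) (x - 1)` and, for `V = (x + 1)² + 4 y²`,
`V' = (2 y) V`. Cofactors add under products, so `H = x⁻² (x - 1)² V / 16` has cofactor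
`-2 y (1 - x) - 2 x y + 2 y = 0`, i.e. it is constant along solutions.
-/

variable {𝕜 : Type*} [NontriviallyNormedField 𝕜]

def HasCofactorAt (f : 𝕜 → 𝕜) (K t : 𝕜) : Prop :=
  HasDerivAt f (K * f t) t

namespace HasCofactorAt

variable {f g : 𝕜 → 𝕜} {K L t : 𝕜}

theorem congr_cofactor (hf : HasCofactorAt f K t) (h : K = L) : HasCofactorAt f L t :=
  h ▸ hf

theorem mul (hf : HasCofactorAt f K t) (hg : HasCofactorAt g L t) :
    HasCofactorAt (fun s => f s * g s) (K + L) t :=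
  (HasDerivAt.fun_mul hf hg).congr_deriv (by ring)

theorem const_mul (c : 𝕜) (hf : HasCofactorAt f K t) :
    HasCofactorAt (fun s => c * f s) K t :=
  (HasDerivAt.const_mul c hf).congr_deriv (by ring)

theorem pow (hf : HasCofactorAt f K t) (n : ℕ) :
    HasCofactorAt (fun s => f s ^ n) (n * K) t := by
  refine (HasDerivAt.fun_pow hf n).congr_deriv ?_
  cases n with
  | zero => simp
  | succ n => rw [Nat.add_sub_cancel]; ring

theorem inv (hf : HasCofactorAt f K t) (h0 : f t ≠ 0) :
    HasCofactorAt (fun s => (f s)⁻¹) (-K) t :=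
  (HasDerivAt.fun_inv hf h0).congr_deriv (by field_simp)

theorem hasDerivAt_zero (hf : HasCofactorAt f 0 t) : HasDerivAt f 0 t := by
  simpa [HasCofactorAt] using hf

end HasCofactorAt

/-- H(x,y) = (1/16) x⁻² (x-1)² (x²+2x+1+4y²) is a first integral of
    ẋ = xy - x²y, ẏ = y² + (1/4)x³ + (1/4)x² + (1/4)x + 1/4:
    along any solution with x ≠ 0, the derivative of H(x(t),y(t)) is zero. -/
theorem first_integral (x y : ℝ → ℝ) (t : ℝ)
    (hx : HasDerivAt x (x t * y t - (x t)^2 * y t) t)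
    (hy : HasDerivAt y ((y t)^2 + (1/4)*(x t)^3 + (1/4)*(x t)^2 + (1/4)*(x t) + 1/4) t)
    (hx0 : x t ≠ 0) :
    HasDerivAt (fun s => (1/16) * ((x s)^2)⁻¹ * (x s - 1)^2
      * ((x s)^2 + 2*(x s) + 1 + 4*(y s)^2)) 0 t := by
  have hX : HasCofactorAt x (y t * (1 - x t)) t := hx.congr_deriv (by ring)
  have hX₁ : HasCofactorAt (fun s => x s - 1) (-(x t * y t)) t :=
    (hx.sub_const 1).congr_deriv (by ring)
  have hV : HasCofactorAt (fun s => (x s)^2 + 2*(x s) + 1 + 4*(y s)^2) (2 * y t) t :=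
    ((((hx.fun_pow 2).add (hx.const_mul 2)).add_const 1).add
      ((hy.fun_pow 2).const_mul 4)).congr_deriv (by ring)
  have hH := ((((hX.pow 2).inv (pow_ne_zero 2 hx0)).const_mul (1/16)).mul (hX₁.pow 2)).mul hV
  exact (hH.congr_cofactor (by push_cast; ring)).hasDerivAt_zero
end

section
/- For k ∈ (0,1), the derivative with respect to z of the function F(z) = (√(1-k²z²)·∫₀^z √(1-k²s²)/√(1-s²) ds - k² z √(1-z²)) / ((1-k²)√(1-k²z²)) equals 1/(√(1-z²)(1-k²z²)^{3/2}) for z ∈ (0,1). -/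
/-!
With `A = √(1 - k²z²)`, `B = √(1 - z²)` and `E` the integral,
`F = (A E - k² z B) / ((1 - k²) A)`. By the fundamental theorem of calculus `E' = A / B`,
and `A' = -k² z / A`, `B' = -z / B`. In the quotient rule the two terms containing `E` itself
cancel, and what remains simplifies to `1 / (B A³)` because
`(1 - k²z²)(1 - k² + k²z²) - k⁴z²(1 - z²) = 1 - k²`.
-/

open Real Set intervalIntegral

lemma hasDerivAt_sqrt_one_sub_mul_sq {c z : ℝ} (h : 0 < 1 - c * z ^ 2) :
    HasDerivAt (fun z => √(1 - c * z ^ 2)) (-(c * z) / √(1 - c * z ^ 2)) z := by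
  have hpoly : HasDerivAt (fun z : ℝ => 1 - c * z ^ 2) (-(c * (2 * z))) z := by
    simpa using ((hasDerivAt_pow 2 z).const_mul c).const_sub 1
  convert hpoly.sqrt h.ne' using 1
  field_simp

lemma continuousAt_sqrt_div_sqrt_one_sub_sq (c : ℝ) {s : ℝ} (hs : s ∈ Ioo (-1 : ℝ) 1) :
    ContinuousAt (fun s => √(1 - c * s ^ 2) / √(1 - s ^ 2)) s := by
  have hpos : 0 < 1 - s ^ 2 := by nlinarith [hs.1, hs.2]
  exact (continuous_sqrt.comp (by fun_prop)).continuousAt.div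
    (continuous_sqrt.comp (by fun_prop)).continuousAt (sqrt_pos.mpr hpos).ne'

lemma hasDerivAt_integral_sqrt_div_sqrt (c : ℝ) {z : ℝ} (hz : z ∈ Ioo (-1 : ℝ) 1) :
    HasDerivAt (fun u => ∫ s in (0 : ℝ)..u, √(1 - c * s ^ 2) / √(1 - s ^ 2))
      (√(1 - c * z ^ 2) / √(1 - z ^ 2)) z := by
  have hcont :
      ∀ s ∈ Ioo (-1 : ℝ) 1, ContinuousAt (fun s => √(1 - c * s ^ 2) / √(1 - s ^ 2)) s :=
    fun _ hs => continuousAt_sqrt_div_sqrt_one_sub_sq c hs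
  have hint :
      IntervalIntegrable (fun s => √(1 - c * s ^ 2) / √(1 - s ^ 2)) MeasureTheory.volume 0 z :=
    ContinuousOn.intervalIntegrable fun s hs =>
      (hcont s <| ordConnected_Ioo.uIcc_subset ⟨by norm_num, by norm_num⟩ hz hs)
        |>.continuousWithinAt
  exact integral_hasDerivAt_right hint
    (ContinuousAt.stronglyMeasurableAtFilter isOpen_Ioo hcont z hz) (hcont z hz)

lemma rpow_three_halves {x : ℝ} (hx : 0 ≤ x) : x ^ ((3 : ℝ) / 2) = √x ^ 3 := by
  rw [rpow_div_two_eq_sqrt _ hx]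
  norm_cast

/-- For k ∈ (0,1) and z ∈ (0,1), the derivative of
    F(z) = (√(1-k²z²)·∫₀^z √(1-k²s²)/√(1-s²) ds - k²z√(1-z²)) / ((1-k²)√(1-k²z²))
    equals 1/(√(1-z²)(1-k²z²)^{3/2}). -/
theorem deriv_F (k : ℝ) (hk : k ∈ Set.Ioo (0:ℝ) 1)
    (z : ℝ) (hz : z ∈ Set.Ioo (0:ℝ) 1) :
    HasDerivAt (fun z =>
        (Real.sqrt (1 - k^2*z^2)
            * (∫ s in (0:ℝ)..z, Real.sqrt (1 - k^2*s^2) / Real.sqrt (1 - s^2))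
          - k^2 * z * Real.sqrt (1 - z^2))
        / ((1 - k^2) * Real.sqrt (1 - k^2*z^2)))
      (1 / (Real.sqrt (1 - z^2) * (1 - k^2*z^2) ^ ((3:ℝ)/2))) z := by
  obtain ⟨hk0, hk1⟩ := hk
  obtain ⟨hz0, hz1⟩ := hz
  have hk_sq : 0 < 1 - k ^ 2 := by nlinarith
  have hB : 0 < 1 - z ^ 2 := by nlinarith
  have hA : 0 < 1 - k ^ 2 * z ^ 2 := by nlinarith
  have hA' := hasDerivAt_sqrt_one_sub_mul_sq hA
  have hB' : HasDerivAt (fun z => √(1 - z ^ 2)) (-z / √(1 - z ^ 2)) z := by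
    simpa using hasDerivAt_sqrt_one_sub_mul_sq (c := 1) (by simpa using hB)
  have hE' := hasDerivAt_integral_sqrt_div_sqrt (k ^ 2) (z := z) ⟨by linarith, hz1⟩
  have hF := ((hA'.fun_mul hE').fun_sub (((hasDerivAt_id' z).const_mul (k ^ 2)).fun_mul hB')
    ).fun_div (hA'.const_mul (1 - k ^ 2)) (by positivity)
  refine hF.congr_deriv ?_
  rw [rpow_three_halves hA.le]
  have sqA := sq_sqrt hA.le
  have sqB := sq_sqrt hB.le
  have sqrtA_pos := sqrt_pos.mpr hA
  have sqrtB_pos := sqrt_pos.mpr hB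
  field_simp
  linear_combination
    (√(1 - k ^ 2 * z ^ 2) ^ 2 - k ^ 2 * √(1 - z ^ 2) ^ 2 + 1) * sqA - k ^ 2 * sqB
end

section
/- The complete elliptic integrals K(k) = ∫₀^{π/2} dθ/√(1-k²sin²θ) and E(k) = ∫₀^{π/2} √(1-k²sin²θ) dθ satisfy the Picard–Fuchs equations dK/dk = (E - (1-k²)K)/(k(1-k²)) and dE/dk = (E - K)/k for k ∈ (0,1). -/
/-!
Write `Δ = √(1 - k² sin² θ)`. For `|k| < 1` the integrands of `K` and `E` are smooth in `k`,
uniformly in `θ`, so one may differentiate under the integral sign: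
`E' = ∫ -k sin² θ / Δ = (E - K) / k` and `K' = ∫ k sin² θ / Δ³ = (∫ 1 / Δ³ - K) / k`,
both by `k² sin² θ = 1 - Δ²`. The integral of `1 / Δ³` is eliminated by the exact derivative
`d/dθ (k² sin θ cos θ / Δ) = Δ - (1 - k²) / Δ³`, whose integral over `[0, π/2]` vanishes,
so that `(1 - k²) ∫ 1 / Δ³ = E`.
-/

open Real MeasureTheory intervalIntegral Metric Set Function

theorem hasDerivAt_intervalIntegral_of_continuousOn {E : Type*} [NormedAddCommGroup E]
    [NormedSpace ℝ E] [CompleteSpace E] {F F' : ℝ → ℝ → E} {x₀ ε a b : ℝ} (hε : 0 < ε)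
    (hF : ∀ x ∈ ball x₀ ε, ContinuousOn (F x) (uIcc a b))
    (hF' : ContinuousOn (uncurry F') (closedBall x₀ ε ×ˢ uIcc a b))
    (h_diff : ∀ x ∈ ball x₀ ε, ∀ t ∈ uIcc a b, HasDerivAt (F · t) (F' x t) x) :
    HasDerivAt (fun x => ∫ t in a..b, F x t) (∫ t in a..b, F' x₀ t) x₀ := by
  obtain ⟨C, hC⟩ :=
    ((isCompact_closedBall x₀ ε).prod isCompact_uIcc).exists_bound_of_continuousOn hF'
  have hF'₀ : ContinuousOn (F' x₀) (uIcc a b) :=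
    hF'.comp (continuousOn_const.prodMk continuousOn_id)
      fun t ht => ⟨mem_closedBall_self hε.le, ht⟩
  refine (hasDerivAt_integral_of_dominated_loc_of_deriv_le (bound := fun _ => C)
    (ball_mem_nhds x₀ hε) ?_ (hF x₀ (mem_ball_self hε)).intervalIntegrable
    ((hF'₀.mono uIoc_subset_uIcc).aestronglyMeasurable measurableSet_uIoc) ?_
    intervalIntegrable_const ?_).2
  · filter_upwards [ball_mem_nhds x₀ hε] with x hx
    exact ((hF x hx).mono uIoc_subset_uIcc).aestronglyMeasurable measurableSet_uIoc
  · exact .of_forall fun t ht x hx =>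
      hC (x, t) ⟨ball_subset_closedBall hx, uIoc_subset_uIcc ht⟩
  · exact .of_forall fun t ht x hx => h_diff x hx t (uIoc_subset_uIcc ht)

theorem one_sub_sq_mul_sin_sq_pos {k : ℝ} (hk : |k| < 1) (θ : ℝ) :
    0 < 1 - k ^ 2 * sin θ ^ 2 := by
  have hk2 : k ^ 2 < 1 := (sq_lt_one_iff_abs_lt_one k).2 hk
  nlinarith [sin_sq_le_one θ, sq_nonneg (sin θ), sq_nonneg k]

theorem hasDerivAt_integral_comp_one_sub_sq_mul_sin_sq {f f' : ℝ → ℝ} {k a b : ℝ}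
    (hf : ∀ u > 0, HasDerivAt f (f' u) u) (hf' : ContinuousOn f' (Ioi 0)) (hk : |k| < 1) :
    HasDerivAt (fun k => ∫ θ in a..b, f (1 - k ^ 2 * sin θ ^ 2))
      (∫ θ in a..b, f' (1 - k ^ 2 * sin θ ^ 2) * -(2 * k * sin θ ^ 2)) k := by
  set ε := (1 - |k|) / 2 with hε_def
  have hε : 0 < ε := by linarith
  have hpos : ∀ x ∈ closedBall k ε, ∀ θ, 0 < 1 - x ^ 2 * sin θ ^ 2 := fun x hx =>
    one_sub_sq_mul_sin_sq_pos <| by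
      have := abs_sub_abs_le_abs_sub x k
      rw [mem_closedBall, dist_eq] at hx
      linarith
  have hf_cont : ContinuousOn f (Ioi 0) := fun u hu =>
    (hf u hu).continuousAt.continuousWithinAt
  refine hasDerivAt_intervalIntegral_of_continuousOn
    (F := fun x θ => f (1 - x ^ 2 * sin θ ^ 2))
    (F' := fun x θ => f' (1 - x ^ 2 * sin θ ^ 2) * -(2 * x * sin θ ^ 2)) hε
    (fun x hx => (hf_cont.comp_continuous (by fun_prop)
      (hpos x (ball_subset_closedBall hx))).continuousOn)
    ((hf'.comp (by fun_prop) fun p hp => hpos p.1 hp.1 p.2).mul (by fun_prop))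
    fun x hx θ _ => ?_
  exact ((hf _ (hpos x (ball_subset_closedBall hx) θ)).comp x
    (((hasDerivAt_pow 2 x).mul_const (sin θ ^ 2)).const_sub 1)).congr_deriv (by norm_num)

theorem hasDerivAt_one_div_sqrt {u : ℝ} (hu : 0 < u) :
    HasDerivAt (fun u => 1 / √u) (-1 / (2 * √u ^ 3)) u := by
  simp only [one_div]
  refine ((hasDerivAt_sqrt hu.ne').inv (sqrt_pos.2 hu).ne').congr_deriv ?_
  field_simp

theorem hasDerivAt_sq_mul_sin_mul_cos_div_sqrt {k θ : ℝ} (h : 0 < 1 - k ^ 2 * sin θ ^ 2) :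
    HasDerivAt (fun θ => k ^ 2 * sin θ * cos θ / √(1 - k ^ 2 * sin θ ^ 2))
      (√(1 - k ^ 2 * sin θ ^ 2) - (1 - k ^ 2) * (1 / √(1 - k ^ 2 * sin θ ^ 2) ^ 3)) θ := by
  have hΔ := sqrt_pos.2 h
  have hΔsq := sq_sqrt h.le
  have hinner : HasDerivAt (fun θ => 1 - k ^ 2 * sin θ ^ 2)
      (-(k ^ 2 * (2 * sin θ * cos θ))) θ :=
    (((hasDerivAt_sin θ).pow 2).const_mul (k ^ 2)).const_sub 1 |>.congr_deriv (by ring)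
  refine ((((hasDerivAt_sin θ).const_mul (k ^ 2)).mul (hasDerivAt_cos θ)).div
    ((hasDerivAt_sqrt h.ne').comp θ hinner) hΔ.ne').congr_deriv ?_
  simp only [comp_apply, Pi.mul_apply]
  generalize √(1 - k ^ 2 * sin θ ^ 2) = Δ at hΔ hΔsq ⊢
  field_simp
  rw [cos_sq', show Δ ^ 4 = (Δ ^ 2) ^ 2 by ring, hΔsq]
  ring

noncomputable def ellipticK (k : ℝ) : ℝ := ∫ θ in (0 : ℝ)..π / 2, 1 / √(1 - k ^ 2 * sin θ ^ 2)

noncomputable def ellipticE (k : ℝ) : ℝ := ∫ θ in (0 : ℝ)..π / 2, √(1 - k ^ 2 * sin θ ^ 2)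

section

variable {k : ℝ}

theorem intervalIntegrable_sqrt_one_sub_sq_mul_sin_sq (k a b : ℝ) :
    IntervalIntegrable (fun θ => √(1 - k ^ 2 * sin θ ^ 2)) volume a b :=
  (by fun_prop : Continuous fun θ => √(1 - k ^ 2 * sin θ ^ 2)).intervalIntegrable a b

theorem intervalIntegrable_one_div_sqrt_one_sub_sq_mul_sin_sq_pow (hk : |k| < 1) (n : ℕ)
    (a b : ℝ) : IntervalIntegrable (fun θ => 1 / √(1 - k ^ 2 * sin θ ^ 2) ^ n) volume a b :=
  (continuous_const.div (by fun_prop) fun θ =>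
    pow_ne_zero n (sqrt_pos.2 (one_sub_sq_mul_sin_sq_pos hk θ)).ne').intervalIntegrable a b

theorem intervalIntegrable_one_div_sqrt_one_sub_sq_mul_sin_sq (hk : |k| < 1) (a b : ℝ) :
    IntervalIntegrable (fun θ => 1 / √(1 - k ^ 2 * sin θ ^ 2)) volume a b := by
  simpa using intervalIntegrable_one_div_sqrt_one_sub_sq_mul_sin_sq_pow hk 1 a b

theorem one_sub_sq_mul_integral_one_div_sqrt_pow_three (hk : |k| < 1) :
    (1 - k ^ 2) * ∫ θ in (0 : ℝ)..π / 2, 1 / √(1 - k ^ 2 * sin θ ^ 2) ^ 3 = ellipticE k := by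
  have hE := intervalIntegrable_sqrt_one_sub_sq_mul_sin_sq k 0 (π / 2)
  have hK₃ := (intervalIntegrable_one_div_sqrt_one_sub_sq_mul_sin_sq_pow hk 3 0 (π / 2)).const_mul
    (1 - k ^ 2)
  have hFTC := integral_eq_sub_of_hasDerivAt
    (fun θ _ => hasDerivAt_sq_mul_sin_mul_cos_div_sqrt (one_sub_sq_mul_sin_sq_pos hk θ))
    (hE.sub hK₃)
  rw [integral_sub hE hK₃, intervalIntegral.integral_const_mul] at hFTC
  simp only [cos_pi_div_two, sin_zero, mul_zero, zero_mul, zero_div, sub_zero] at hFTC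
  rw [ellipticE]
  linarith

theorem hasDerivAt_ellipticE (hk0 : k ≠ 0) (hk : |k| < 1) :
    HasDerivAt ellipticE ((ellipticE k - ellipticK k) / k) k := by
  have hf' : ContinuousOn (fun u => 1 / (2 * √u)) (Ioi 0) :=
    continuousOn_const.div (by fun_prop) fun u (hu : 0 < u) => by positivity
  refine (hasDerivAt_integral_comp_one_sub_sq_mul_sin_sq (a := 0) (b := π / 2)
    (fun u hu => hasDerivAt_sqrt hu.ne') hf' hk).congr_deriv ?_
  rw [eq_comm, ellipticE, ellipticK,
    ← integral_sub (intervalIntegrable_sqrt_one_sub_sq_mul_sin_sq k _ _)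
      (intervalIntegrable_one_div_sqrt_one_sub_sq_mul_sin_sq hk _ _),
    ← intervalIntegral.integral_div]
  refine integral_congr fun θ _ => ?_
  have hΔ := sqrt_pos.2 (one_sub_sq_mul_sin_sq_pos hk θ)
  have hΔsq := sq_sqrt (one_sub_sq_mul_sin_sq_pos hk θ).le
  generalize √(1 - k ^ 2 * sin θ ^ 2) = Δ at hΔ hΔsq ⊢
  field_simp
  linear_combination hΔsq

theorem hasDerivAt_ellipticK (hk0 : k ≠ 0) (hk : |k| < 1) :
    HasDerivAt ellipticK ((ellipticE k - (1 - k ^ 2) * ellipticK k) / (k * (1 - k ^ 2))) k := by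
  have hk2 : 1 - k ^ 2 ≠ 0 := by
    have := (sq_lt_one_iff_abs_lt_one k).2 hk
    linarith
  have hf' : ContinuousOn (fun u => -1 / (2 * √u ^ 3)) (Ioi 0) :=
    continuousOn_const.div (by fun_prop) fun u (hu : 0 < u) => by positivity
  refine (hasDerivAt_integral_comp_one_sub_sq_mul_sin_sq (a := 0) (b := π / 2)
    (fun u hu => hasDerivAt_one_div_sqrt hu) hf' hk).congr_deriv ?_
  have hK' : ∫ θ in (0 : ℝ)..π / 2, -1 / (2 * √(1 - k ^ 2 * sin θ ^ 2) ^ 3) * -(2 * k * sin θ ^ 2)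
      = ((∫ θ in (0 : ℝ)..π / 2, 1 / √(1 - k ^ 2 * sin θ ^ 2) ^ 3) - ellipticK k) / k := by
    rw [ellipticK,
      ← integral_sub (intervalIntegrable_one_div_sqrt_one_sub_sq_mul_sin_sq_pow hk 3 _ _)
        (intervalIntegrable_one_div_sqrt_one_sub_sq_mul_sin_sq hk _ _),
      ← intervalIntegral.integral_div]
    refine integral_congr fun θ _ => ?_
    have hΔ := sqrt_pos.2 (one_sub_sq_mul_sin_sq_pos hk θ)
    have hΔsq := sq_sqrt (one_sub_sq_mul_sin_sq_pos hk θ).le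
    generalize √(1 - k ^ 2 * sin θ ^ 2) = Δ at hΔ hΔsq ⊢
    field_simp
    linear_combination hΔsq
  rw [hK', ← one_sub_sq_mul_integral_one_div_sqrt_pow_three hk]
  field_simp

end

/-- The complete elliptic integrals K(k), E(k) satisfy the Picard–Fuchs
    equations dK/dk = (E - (1-k²)K)/(k(1-k²)) and dE/dk = (E - K)/k
    for k ∈ (0,1). -/
theorem picard_fuchs (k : ℝ) (hk : k ∈ Set.Ioo (0:ℝ) 1) :
    HasDerivAt (fun k => ∫ θ in (0:ℝ)..(π/2), 1 / Real.sqrt (1 - k^2 * (Real.sin θ)^2))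
      (((∫ θ in (0:ℝ)..(π/2), Real.sqrt (1 - k^2 * (Real.sin θ)^2))
          - (1 - k^2) * (∫ θ in (0:ℝ)..(π/2), 1 / Real.sqrt (1 - k^2 * (Real.sin θ)^2)))
        / (k * (1 - k^2))) k ∧
    HasDerivAt (fun k => ∫ θ in (0:ℝ)..(π/2), Real.sqrt (1 - k^2 * (Real.sin θ)^2))
      (((∫ θ in (0:ℝ)..(π/2), Real.sqrt (1 - k^2 * (Real.sin θ)^2))
          - (∫ θ in (0:ℝ)..(π/2), 1 / Real.sqrt (1 - k^2 * (Real.sin θ)^2))) / k) k := by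
  have hk0 : k ≠ 0 := hk.1.ne'
  have hk1 : |k| < 1 := abs_lt.2 ⟨by linarith [hk.1], hk.2⟩
  exact ⟨hasDerivAt_ellipticK hk0 hk1, hasDerivAt_ellipticE hk0 hk1⟩
end
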